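/- Let ν > -1 and let g_ν be the entire function g_ν(z) = 2^ν·Γ(ν+1)·z^{1-ν}·J_ν(z) = Σ_{n≥0} (-1)^n·Γ(ν+1)/(4^n·n!·Γ(n+ν+1)) · z^{2n+1}, where J_ν is the Bessel function of the first kind. Then the radius of convexity r^c(g_ν) satisfies the upper bounds r^c(g_ν) < 6√((ν+1)(ν+2)/(56ν+137)), r^c(g_ν) < √(2(56ν+137)(ν+1)(ν+3)/(208ν²+1172ν+1693)), and r^c(g_ν) < 2√(2(ν+1)(ν+2)(ν+4)(208ν²+1172ν+1693)/(3104ν⁴+36768ν³+161424ν²+312197ν+223803)). -/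

import Mathlib

/-!
Put `u = ν + 1` and `aₙ = Γ(u) / (4ⁿ n! Γ(n + u))`, so that `g_ν(z) = ∑ (-1)ⁿ aₙ z²ⁿ⁺¹`. For real
`x` with `x² = t`, `g'(x) = ψ(t)` and `x g''(x) = φ(t) - ψ(t)`, where
`ψ(t) = ∑ (-1)ⁿ aₙ (2n+1) tⁿ` and `φ(t) = ∑ (-1)ⁿ aₙ (2n+1)² tⁿ`; hence
`1 + x g''(x) / g'(x) = φ(t) / ψ(t)`. For `0 ≤ t ≤ u` both are alternating series whose terms
decrease from the second one on, so `ψ(t)` is at least its partial sum of degree 3 and `φ(t)` at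
most its partial sum of degree 4. At an explicit `t` just below the square of the sharpest of the
three bounds the first partial sum is positive and the second negative, so the real part of
`1 + z g''/g'` is negative at `z = √t` and `r^c(g_ν) ≤ √t`. The three bounds are ordered, so the
sharpest one implies the other two.
-/

open Finset
open scoped Nat

noncomputable def besselG (ν : ℝ) (z : ℂ) : ℂ :=
  ∑' n : ℕ, (((-1 : ℝ) ^ n * Real.Gamma (ν + 1) /
      (4 ^ n * n.factorial * Real.Gamma (n + ν + 1)) : ℝ) : ℂ) * z ^ (2 * n + 1)

noncomputable def radiusOfConvexity (f : ℂ → ℂ) : ℝ :=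
  sSup {r : ℝ | 0 < r ∧ ∀ z : ℂ, ‖z‖ < r →
    0 < (1 + z * deriv (deriv f) z / deriv f z).re}

theorem sum_range_succ_alternating (f : ℕ → ℝ) (n : ℕ) :
    ∑ i ∈ range (n + 1), (-1) ^ i * f i = f 0 - ∑ i ∈ range n, (-1) ^ i * f (i + 1) := by
  simp [sum_range_succ', pow_succ, sub_eq_neg_add]

theorem tsum_alternating_eq_sub {f : ℕ → ℝ} (hf : Summable f) :
    ∑' i, (-1) ^ i * f i = f 0 - ∑' i, (-1) ^ i * f (i + 1) := by
  rw [hf.alternating.tsum_eq_zero_add, sub_eq_add_neg, ← tsum_neg]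
  simp [pow_succ]

theorem sum_range_le_tsum_alternating {f : ℕ → ℝ} (hf : Summable f)
    (hfa : Antitone fun n => f (n + 1)) (k : ℕ) :
    ∑ i ∈ range (2 * k + 2), (-1) ^ i * f i ≤ ∑' i, (-1) ^ i * f i := by
  have h := hfa.tendsto_le_alternating_series
    ((summable_nat_add_iff 1).2 hf).tendsto_alternating_series_tsum k
  rw [sum_range_succ_alternating, tsum_alternating_eq_sub hf]
  linarith

theorem tsum_alternating_le_sum_range {f : ℕ → ℝ} (hf : Summable f)
    (hfa : Antitone fun n => f (n + 1)) (k : ℕ) :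
    ∑' i, (-1) ^ i * f i ≤ ∑ i ∈ range (2 * k + 1), (-1) ^ i * f i := by
  have h := hfa.alternating_series_le_tendsto
    ((summable_nat_add_iff 1).2 hf).tendsto_alternating_series_tsum k
  rw [sum_range_succ_alternating, tsum_alternating_eq_sub hf]
  linarith

theorem deriv_tsum_mul_pow {c : ℕ → ℂ} {e : ℕ → ℕ}
    (hc : ∀ R : ℝ, Summable fun n => ‖c n‖ * R ^ e n)
    (hc' : ∀ R : ℝ, Summable fun n => ‖c n‖ * e n * R ^ e n) :
    deriv (fun w => ∑' n, c n * w ^ e n) = fun z => ∑' n, c n * e n * z ^ (e n - 1) := by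
  funext z
  have hz : z ∈ Metric.ball (0 : ℂ) (‖z‖ + 1) := by simp
  refine (hasDerivAt_tsum_of_isPreconnected (g := fun n w => c n * w ^ e n)
    (g' := fun n w => c n * e n * w ^ (e n - 1)) (hc' (‖z‖ + 1)) Metric.isOpen_ball
    (convex_ball _ _).isPreconnected (fun n y _ => ?_) (fun n y hy => ?_) hz ?_ hz).deriv
  · simpa [mul_assoc] using (hasDerivAt_pow (e n) y).const_mul (c n)
  · have hy : ‖y‖ ≤ ‖z‖ + 1 := (mem_ball_zero_iff.1 hy).le
    calc ‖c n * e n * y ^ (e n - 1)‖ = ‖c n‖ * e n * ‖y‖ ^ (e n - 1) := by simp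
      _ ≤ ‖c n‖ * e n * (‖z‖ + 1) ^ (e n - 1) := by gcongr
      _ ≤ ‖c n‖ * e n * (‖z‖ + 1) ^ e n := by
          gcongr
          · linarith [norm_nonneg z]
          · omega
  · exact .of_norm_bounded (hc ‖z‖) fun n => by simp

theorem radiusOfConvexity_le_norm {f : ℂ → ℂ} {z : ℂ}
    (hz : (1 + z * deriv (deriv f) z / deriv f z).re ≤ 0) : radiusOfConvexity f ≤ ‖z‖ := by
  refine Real.sSup_le (fun r ⟨_, hr⟩ => ?_) (norm_nonneg z)
  by_contra! h
  exact (hr z h).not_ge hz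

noncomputable def besselCoeff (u : ℝ) : ℕ → ℝ
  | 0 => 1
  | n + 1 => besselCoeff u n / (4 * (n + 1) * (n + u))

noncomputable def besselTerm (u : ℝ) (k : ℕ) (t : ℝ) (n : ℕ) : ℝ :=
  besselCoeff u n * (2 * n + 1) ^ k * t ^ n

noncomputable def besselSeries (u : ℝ) (k : ℕ) (t : ℝ) : ℝ :=
  ∑' n, (-1) ^ n * besselTerm u k t n

section besselCoeff

variable {u : ℝ}

theorem besselCoeff_pos (hu : 0 < u) (n : ℕ) : 0 < besselCoeff u n := by
  induction n with
  | zero => exact one_pos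
  | succ n ih => exact div_pos ih (by positivity)

theorem Gamma_div_eq_besselCoeff (hu : 0 < u) (n : ℕ) :
    Real.Gamma u / (4 ^ n * n ! * Real.Gamma (n + u)) = besselCoeff u n := by
  induction n with
  | zero => simp [besselCoeff, (Real.Gamma_pos_of_pos hu).ne']
  | succ n ih =>
    have hnu : 0 < n + u := by positivity
    rw [besselCoeff, ← ih, Nat.cast_succ, add_right_comm, Real.Gamma_add_one hnu.ne',
      Nat.factorial_succ]
    have := (Real.Gamma_pos_of_pos hnu).ne'
    push_cast
    field_simp
    ring

theorem besselCoeff_le (hu : 0 < u) (n : ℕ) : besselCoeff u n ≤ (4 * u)⁻¹ ^ n / n ! := by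
  induction n with
  | zero => simp [besselCoeff]
  | succ n ih =>
    calc besselCoeff u (n + 1) ≤ (4 * u)⁻¹ ^ n / n ! / (4 * (n + 1) * u) := by
          rw [besselCoeff]
          gcongr
          linarith
      _ = (4 * u)⁻¹ ^ (n + 1) / (n + 1)! := by
          rw [Nat.factorial_succ, pow_succ]
          push_cast
          field_simp

theorem summable_besselTerm (hu : 0 < u) (k : ℕ) (t : ℝ) : Summable (besselTerm u k t) := by
  refine .of_norm_bounded (Real.summable_pow_div_factorial (3 ^ k * |t| * (4 * u)⁻¹))
    fun n => ?_
  have h3 : (2 * n + 1 : ℝ) ≤ 3 ^ n := by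
    have := one_add_mul_le_pow (a := (2 : ℝ)) (by norm_num) n
    norm_num at this
    linarith
  calc ‖besselTerm u k t n‖ = besselCoeff u n * (2 * n + 1) ^ k * |t| ^ n := by
        have : (0 : ℝ) ≤ 2 * n + 1 := by positivity
        simp [besselTerm, abs_of_pos (besselCoeff_pos hu n), abs_of_nonneg this]
    _ ≤ (4 * u)⁻¹ ^ n / n ! * (3 ^ n) ^ k * |t| ^ n := by
        gcongr
        exact besselCoeff_le hu n
    _ = (3 ^ k * |t| * (4 * u)⁻¹) ^ n / n ! := by
        rw [← pow_mul, mul_comm n k, pow_mul]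
        ring

theorem antitone_besselTerm_succ (hu : 0 < u) {k : ℕ} (hk : k ≤ 2) {t : ℝ} (ht : 0 ≤ t)
    (htu : t ≤ u) : Antitone fun n => besselTerm u k t (n + 1) := by
  refine antitone_nat_of_succ_le fun n => ?_
  have hA : (0 : ℝ) < 4 * (n + 2) * (n + 1 + u) * (2 * n + 3) ^ k := by positivity
  have hB : t * (2 * n + 5) ^ k ≤ 4 * (n + 2) * (n + 1 + u) * (2 * n + 3) ^ k := by
    have h : (2 * n + 5 : ℝ) ^ k ≤ 4 * (n + 2) * (2 * n + 3) ^ k := by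
      interval_cases k <;> nlinarith
    calc t * (2 * n + 5) ^ k ≤ (n + 1 + u) * (4 * (n + 2) * (2 * n + 3) ^ k) := by
          gcongr
          linarith
      _ = _ := by ring
  have hY : 0 ≤ besselTerm u k t (n + 1) := by
    have := besselCoeff_pos hu (n + 1)
    unfold besselTerm
    positivity
  have h : besselTerm u k t (n + 1 + 1) * (4 * (n + 2) * (n + 1 + u) * (2 * n + 3) ^ k) =
      besselTerm u k t (n + 1) * (t * (2 * n + 5) ^ k) := by
    have : (n : ℝ) + 1 + u ≠ 0 := by positivity
    simp only [besselTerm, besselCoeff]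
    push_cast
    field_simp
    ring
  exact le_of_mul_le_mul_right (h.trans_le (mul_le_mul_of_nonneg_left hB hY)) hA

end besselCoeff

section besselG

variable {ν : ℝ}

theorem besselG_eq (hν : -1 < ν) :
    besselG ν =
      fun z => ∑' n : ℕ, (((-1) ^ n * besselCoeff (ν + 1) n : ℝ) : ℂ) * z ^ (2 * n + 1) := by
  funext z
  refine tsum_congr fun n => ?_
  rw [mul_div_assoc, add_assoc, Gamma_div_eq_besselCoeff (by linarith) n]

theorem norm_ofReal_neg_one_pow_mul {x : ℝ} (hx : 0 ≤ x) (n : ℕ) :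
    ‖(((-1) ^ n * x : ℝ) : ℂ)‖ = x := by
  simp [abs_of_nonneg hx]

theorem deriv_besselG (hν : -1 < ν) :
    deriv (besselG ν) = fun z => ∑' n : ℕ,
      (((-1) ^ n * (besselCoeff (ν + 1) n * (2 * n + 1)) : ℝ) : ℂ) * z ^ (2 * n) := by
  have hu : 0 < ν + 1 := by linarith
  have ha n := (besselCoeff_pos hu n).le
  rw [besselG_eq hν, deriv_tsum_mul_pow]
  · funext z
    refine tsum_congr fun n => ?_
    push_cast
    ring
  · intro R
    refine ((summable_besselTerm hu 0 (R ^ 2)).mul_left R).congr fun n => ?_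
    rw [norm_ofReal_neg_one_pow_mul (ha n), besselTerm]
    ring
  · intro R
    refine ((summable_besselTerm hu 1 (R ^ 2)).mul_left R).congr fun n => ?_
    rw [norm_ofReal_neg_one_pow_mul (ha n), besselTerm]
    push_cast
    ring

theorem deriv_deriv_besselG (hν : -1 < ν) :
    deriv (deriv (besselG ν)) = fun z => ∑' n : ℕ,
      (((-1) ^ n * (besselCoeff (ν + 1) n * (2 * n + 1) * (2 * n)) : ℝ) : ℂ) *
        z ^ (2 * n - 1) := by
  have hu : 0 < ν + 1 := by linarith
  have ha n : 0 ≤ besselCoeff (ν + 1) n * (2 * n + 1) := by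
    have := besselCoeff_pos hu n
    positivity
  rw [deriv_besselG hν, deriv_tsum_mul_pow]
  · funext z
    refine tsum_congr fun n => ?_
    push_cast
    ring
  · intro R
    refine (summable_besselTerm hu 1 (R ^ 2)).congr fun n => ?_
    rw [norm_ofReal_neg_one_pow_mul (ha n), besselTerm]
    ring
  · intro R
    refine ((summable_besselTerm hu 2 (R ^ 2)).sub (summable_besselTerm hu 1 (R ^ 2))).congr
      fun n => ?_
    rw [norm_ofReal_neg_one_pow_mul (ha n), besselTerm, besselTerm]
    push_cast
    ring

theorem deriv_besselG_ofReal (hν : -1 < ν) (x : ℝ) :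
    deriv (besselG ν) x = besselSeries (ν + 1) 1 (x ^ 2) := by
  rw [deriv_besselG hν, besselSeries, Complex.ofReal_tsum]
  refine tsum_congr fun n => ?_
  simp only [besselTerm]
  push_cast
  ring

theorem ofReal_mul_deriv_deriv_besselG (hν : -1 < ν) (x : ℝ) :
    x * deriv (deriv (besselG ν)) x =
      ((besselSeries (ν + 1) 2 (x ^ 2) - besselSeries (ν + 1) 1 (x ^ 2) : ℝ) : ℂ) := by
  have hu : 0 < ν + 1 := by linarith
  rw [deriv_deriv_besselG hν, besselSeries, besselSeries,
    ← (summable_besselTerm hu 2 _).alternating.tsum_sub (summable_besselTerm hu 1 _).alternating,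
    Complex.ofReal_tsum, ← tsum_mul_left]
  refine tsum_congr fun n => ?_
  simp only [besselTerm]
  rcases n with _ | n
  · simp
  · rw [show 2 * (n + 1) - 1 = 2 * n + 1 by omega]
    push_cast
    ring

end besselG

theorem radiusOfConvexity_besselG_le_sqrt {ν : ℝ} (hν : -1 < ν) {t : ℝ} (ht : 0 < t)
    (htu : t ≤ ν + 1) (hψ : 0 < ∑ i ∈ range 4, (-1) ^ i * besselTerm (ν + 1) 1 t i)
    (hφ : ∑ i ∈ range 5, (-1) ^ i * besselTerm (ν + 1) 2 t i < 0) :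
    radiusOfConvexity (besselG ν) ≤ √t := by
  have hu : 0 < ν + 1 := by linarith
  have hψ' : 0 < besselSeries (ν + 1) 1 t := hψ.trans_le <|
    sum_range_le_tsum_alternating (summable_besselTerm hu 1 t)
      (antitone_besselTerm_succ hu (by norm_num) ht.le htu) 1
  have hφ' : besselSeries (ν + 1) 2 t < 0 := hφ.trans_le' <|
    tsum_alternating_le_sum_range (summable_besselTerm hu 2 t)
      (antitone_besselTerm_succ hu le_rfl ht.le htu) 2
  have hx : (√t) ^ 2 = t := Real.sq_sqrt ht.le
  have h : 1 + (√t : ℂ) * deriv (deriv (besselG ν)) (√t) / deriv (besselG ν) (√t) =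
      ((besselSeries (ν + 1) 2 t / besselSeries (ν + 1) 1 t : ℝ) : ℂ) := by
    rw [ofReal_mul_deriv_deriv_besselG hν, deriv_besselG_ofReal hν, hx]
    have : (besselSeries (ν + 1) 1 t : ℂ) ≠ 0 := Complex.ofReal_ne_zero.2 hψ'.ne'
    push_cast
    field_simp
    ring
  have hre : (1 + (√t : ℂ) * deriv (deriv (besselG ν)) (√t) / deriv (besselG ν) (√t)).re ≤ 0 := by
    rw [h, Complex.ofReal_re]
    exact (div_neg_of_neg_of_pos hφ' hψ').le
  simpa [abs_of_nonneg (Real.sqrt_nonneg t)] using radiusOfConvexity_le_norm hre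

noncomputable def convexityBound₁ (u : ℝ) : ℝ := 36 * u * (u + 1) / (56 * u + 81)

noncomputable def convexityBound₂ (u : ℝ) : ℝ :=
  2 * (56 * u + 81) * u * (u + 2) / (208 * u ^ 2 + 756 * u + 729)

noncomputable def convexityBound₃ (u : ℝ) : ℝ :=
  8 * u * (u + 1) * (u + 3) * (208 * u ^ 2 + 756 * u + 729) /
    (3104 * u ^ 4 + 24352 * u ^ 3 + 69744 * u ^ 2 + 87237 * u + 39366)

section convexityBound

variable {u : ℝ}

theorem convexityBound₂_le_convexityBound₁ (hu : 0 < u) :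
    convexityBound₂ u ≤ convexityBound₁ u := by
  unfold convexityBound₁ convexityBound₂
  rw [div_le_div_iff₀ (by positivity) (by positivity)]
  nlinarith [pow_pos hu 2, pow_pos hu 3, pow_pos hu 4]

theorem convexityBound₃_le_convexityBound₂ (hu : 0 < u) :
    convexityBound₃ u ≤ convexityBound₂ u := by
  unfold convexityBound₂ convexityBound₃
  rw [div_le_div_iff₀ (by positivity) (by positivity)]
  nlinarith [pow_pos hu 3, pow_pos hu 4, pow_pos hu 5, pow_pos hu 6, pow_pos hu 7]

theorem convexityBound₃_le_self (hu : 0 < u) : convexityBound₃ u ≤ u := by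
  unfold convexityBound₃
  rw [div_le_iff₀ (by positivity)]
  nlinarith [pow_pos hu 2, pow_pos hu 3, pow_pos hu 4, pow_pos hu 5]

theorem sum_range_four_besselTerm_one (hu : 0 < u) (t : ℝ) :
    ∑ i ∈ range 4, (-1) ^ i * besselTerm u 1 t i =
      (384 * u * (u + 1) * (u + 2) - 288 * (u + 1) * (u + 2) * t + 60 * (u + 2) * t ^ 2
        - 7 * t ^ 3) / (384 * u * (u + 1) * (u + 2)) := by
  simp [sum_range_succ, besselTerm, besselCoeff]
  field_simp
  ring

theorem sum_range_five_besselTerm_two (hu : 0 < u) (t : ℝ) :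
    ∑ i ∈ range 5, (-1) ^ i * besselTerm u 2 t i =
      (6144 * u * (u + 1) * (u + 2) * (u + 3) - 13824 * (u + 1) * (u + 2) * (u + 3) * t
        + 4800 * (u + 2) * (u + 3) * t ^ 2 - 784 * (u + 3) * t ^ 3 + 81 * t ^ 4) /
        (6144 * u * (u + 1) * (u + 2) * (u + 3)) := by
  simp [sum_range_succ, besselTerm, besselCoeff]
  field_simp
  ring

theorem exists_besselTerm_partial_sums_sign (hu : 0 < u) : ∃ t, 0 < t ∧ t < convexityBound₃ u ∧
    0 < ∑ i ∈ range 4, (-1) ^ i * besselTerm u 1 t i ∧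
    ∑ i ∈ range 5, (-1) ^ i * besselTerm u 2 t i < 0 := by
  have hb : 0 < convexityBound₃ u := by unfold convexityBound₃; positivity
  have hδ : 0 < u ^ 3 / (5000 * (1 + u) ^ 3) := by positivity
  have hδ₁ : u ^ 3 / (5000 * (1 + u) ^ 3) < 1 := by
    rw [div_lt_one (by positivity)]
    nlinarith [pow_pos hu 2, pow_pos hu 3]
  have hD : 0 < (3104 * u ^ 4 + 24352 * u ^ 3 + 69744 * u ^ 2 + 87237 * u + 39366) *
      (5000 * (1 + u) ^ 3) := by positivity
  have ht : convexityBound₃ u * (1 - u ^ 3 / (5000 * (1 + u) ^ 3)) =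
      8 * u * (u + 1) * (u + 3) * (208 * u ^ 2 + 756 * u + 729) *
          (5000 * (1 + u) ^ 3 - u ^ 3) /
        ((3104 * u ^ 4 + 24352 * u ^ 3 + 69744 * u ^ 2 + 87237 * u + 39366) *
          (5000 * (1 + u) ^ 3)) := by
    unfold convexityBound₃
    field_simp
  -- The window between the first positive zero of the degree-4 partial sum and `convexityBound₃ u`
  -- has relative width of order `u³` as `u → 0` and about `3·10⁻⁴` as `u → ∞`; the factor
  -- `1 - u³ / (5000 (1 + u)³)` stays inside it.
  -- Once denominators are cleared, each sign condition says that a polynomial in `u` with positive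
  -- coefficients is positive.
  refine ⟨convexityBound₃ u * (1 - u ^ 3 / (5000 * (1 + u) ^ 3)), mul_pos hb (by linarith),
    mul_lt_of_lt_one_right hb (by linarith), ?_, ?_⟩
  · rw [sum_range_four_besselTerm_one hu, ht]
    refine div_pos ?_ (by positivity)
    rw [← mul_pos_iff_of_pos_right (pow_pos hD 3)]
    field_simp
    ring_nf
    positivity
  · rw [sum_range_five_besselTerm_two hu, ht]
    refine div_neg_of_neg_of_pos ?_ (by positivity)
    rw [← neg_pos, ← mul_pos_iff_of_pos_right (pow_pos hD 4)]
    field_simp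
    ring_nf
    positivity

theorem sqrt_convexityBound₁_add_one (ν : ℝ) :
    √(convexityBound₁ (ν + 1)) = 6 * √((ν + 1) * (ν + 2) / (56 * ν + 137)) := by
  rw [← Real.sqrt_sq (by norm_num : (0 : ℝ) ≤ 6), ← Real.sqrt_mul (by norm_num)]
  congr 1
  unfold convexityBound₁
  ring

theorem sqrt_convexityBound₂_add_one (ν : ℝ) :
    √(convexityBound₂ (ν + 1)) =
      √(2 * (56 * ν + 137) * (ν + 1) * (ν + 3) / (208 * ν ^ 2 + 1172 * ν + 1693)) := by
  congr 1
  unfold convexityBound₂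
  ring

theorem sqrt_convexityBound₃_add_one (ν : ℝ) :
    √(convexityBound₃ (ν + 1)) =
      2 * √(2 * (ν + 1) * (ν + 2) * (ν + 4) * (208 * ν ^ 2 + 1172 * ν + 1693) /
        (3104 * ν ^ 4 + 36768 * ν ^ 3 + 161424 * ν ^ 2 + 312197 * ν + 223803)) := by
  rw [← Real.sqrt_sq (by norm_num : (0 : ℝ) ≤ 2), ← Real.sqrt_mul (by norm_num)]
  congr 1
  unfold convexityBound₃
  ring

end convexityBound

theorem stmt10 (ν : ℝ) (hν : -1 < ν) :
    radiusOfConvexity (besselG ν) < 6 * Real.sqrt ((ν + 1) * (ν + 2) / (56 * ν + 137)) ∧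
    radiusOfConvexity (besselG ν) <
      Real.sqrt (2 * (56 * ν + 137) * (ν + 1) * (ν + 3) /
        (208 * ν ^ 2 + 1172 * ν + 1693)) ∧
    radiusOfConvexity (besselG ν) <
      2 * Real.sqrt (2 * (ν + 1) * (ν + 2) * (ν + 4) * (208 * ν ^ 2 + 1172 * ν + 1693) /
        (3104 * ν ^ 4 + 36768 * ν ^ 3 + 161424 * ν ^ 2 + 312197 * ν + 223803)) := by
  have hu : 0 < ν + 1 := by linarith
  obtain ⟨t, ht, htb, hψ, hφ⟩ := exists_besselTerm_partial_sums_sign hu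
  have hr : radiusOfConvexity (besselG ν) < √(convexityBound₃ (ν + 1)) :=
    (radiusOfConvexity_besselG_le_sqrt hν ht (htb.le.trans (convexityBound₃_le_self hu)) hψ
      hφ).trans_lt (Real.sqrt_lt_sqrt ht.le htb)
  have h₂ := convexityBound₃_le_convexityBound₂ hu
  have h₁ := convexityBound₂_le_convexityBound₁ hu
  refine ⟨?_, ?_, ?_⟩
  · rw [← sqrt_convexityBound₁_add_one]
    exact hr.trans_le (Real.sqrt_le_sqrt (h₂.trans h₁))
  · rw [← sqrt_convexityBound₂_add_one]
    exact hr.trans_le (Real.sqrt_le_sqrt h₂)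
  · rwa [← sqrt_convexityBound₃_add_one]
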